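/- arXiv:2208.01628 — 2 statements merged into one kernel-verified Lean document; each statement's English description precedes it below -/
import Mathlib

section
/- Let ω = e^{2πi/3}, Λ = ℤω ⊕ ℤ, ⟨z,w⟩ := Re(z·conj(w)), K = 4π/3 and z_S = i/√3. Suppose v : ℂ → ℂ satisfies v(z+γ) = e^{2i⟨γ,K⟩}v(z) for all γ ∈ Λ and all z ∈ ℂ, and v(ωz) = v(z) for all z ∈ ℂ. Then v(z_S) = 0 and v(−z_S) = 0. -/
/- The rotation `z ↦ ωz` fixes the class of each stacking point modulo `Λ`: `ω z_S = z_S + γ` with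
`γ = -1 - ω ∈ Λ`, and `ω (-z_S) = -z_S - γ`. Rotation invariance and the Bloch condition then give
`v(±z_S) = e^{∓2i⟨γ,K⟩} v(±z_S)`, and the phase `e^{∓4πi/3}` is not `1`. -/

open Complex

noncomputable section

/-- `ω = e^{2πi/3}`. -/
def ω : ℂ := Complex.exp (2 * (Real.pi : ℂ) * Complex.I / 3)

/-- The hexagonal lattice `Λ = ℤω ⊕ ℤ`. -/
def inΛ (γ : ℂ) : Prop := ∃ m n : ℤ, γ = (m : ℂ) * ω + (n : ℂ)

/-- The pairing `⟨z,w⟩ = Re (z ⬝ conj w)`. -/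
def pairing (z w : ℂ) : ℝ := (z * (starRingEnd ℂ) w).re

/-- The Dirac momentum `K = 4π/3`. -/
def Kpt : ℂ := 4 * (Real.pi : ℂ) / 3

/-- The stacking point `z_S = i/√3`. -/
def zS : ℂ := Complex.I / (Real.sqrt 3 : ℂ)

lemma ω_eq : ω = -(1 / 2) + ((Real.sqrt 3 / 2 : ℝ) : ℂ) * I := by
  have hangle : 2 * (Real.pi : ℂ) * I / 3 = ((Real.pi - Real.pi / 3 : ℝ) : ℂ) * I := by
    push_cast; ring
  rw [ω, hangle, exp_mul_I, ← ofReal_cos, ← ofReal_sin, Real.cos_pi_sub, Real.sin_pi_sub,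
    Real.cos_pi_div_three, Real.sin_pi_div_three]
  push_cast; ring

lemma inΛ_one_add_ω : inΛ (1 + ω) := ⟨1, 1, by push_cast; ring⟩

lemma inΛ_neg_one_sub_ω : inΛ (-1 - ω) := ⟨-1, -1, by push_cast; ring⟩

lemma ω_mul_zS : ω * zS = zS + (-1 - ω) := by
  have hsqrt : (Real.sqrt 3 : ℂ) * Real.sqrt 3 = 3 := by
    exact_mod_cast Real.mul_self_sqrt (by norm_num : (0 : ℝ) ≤ 3)
  have hsqrt_ne : (Real.sqrt 3 : ℂ) ≠ 0 := by
    exact_mod_cast Real.sqrt_ne_zero'.mpr (by norm_num)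
  rw [ω_eq, zS]
  field_simp
  push_cast
  linear_combination I * hsqrt + (Real.sqrt 3 : ℂ) * I_sq

lemma ω_mul_neg_zS : ω * -zS = -zS + (1 + ω) := by
  linear_combination -ω_mul_zS

lemma pairing_neg_left (z w : ℂ) : pairing (-z) w = -pairing z w := by
  simp [pairing]

lemma pairing_one_add_ω_Kpt : pairing (1 + ω) Kpt = 2 * Real.pi / 3 := by
  have hK : Kpt = ((4 * Real.pi / 3 : ℝ) : ℂ) := by rw [Kpt]; push_cast; ring
  rw [pairing, hK, conj_ofReal, ω_eq]
  simp only [mul_re, add_re, add_im, one_re, one_im, neg_re, neg_im, div_ofNat_re,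
    div_ofNat_im, ofReal_re, ofReal_im, mul_im, I_re, I_im]
  ring

lemma pairing_neg_one_sub_ω_Kpt : pairing (-1 - ω) Kpt = -(2 * Real.pi / 3) := by
  rw [show -1 - ω = -(1 + ω) by ring, pairing_neg_left, pairing_one_add_ω_Kpt]

lemma exp_two_mul_I_mul_ofReal_eq_one_iff (r : ℝ) :
    exp (2 * I * r) = 1 ↔ ∃ n : ℤ, r = n * Real.pi := by
  rw [exp_eq_one_iff]
  refine exists_congr fun n => ⟨fun h => ?_, fun h => by rw [h]; push_cast; ring⟩
  have him := congrArg im h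
  simp only [mul_im, mul_re, re_ofNat, im_ofNat, I_re, I_im, ofReal_re, ofReal_im,
    intCast_re, intCast_im] at him
  linarith

lemma exp_two_mul_I_mul_two_pi_div_three_ne_one {k : ℤ} (hk : ¬ (3 : ℤ) ∣ k) :
    exp (2 * I * ((k * (2 * Real.pi / 3) : ℝ) : ℂ)) ≠ 1 := by
  rw [Ne, exp_two_mul_I_mul_ofReal_eq_one_iff]
  rintro ⟨n, hn⟩
  have h2k : (2 * k : ℝ) = 3 * n := by
    have := Real.pi_pos
    nlinarith
  have : (2 * k : ℤ) = 3 * n := by exact_mod_cast h2k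
  omega

lemma eq_zero_of_ω_mul_eq_add {v : ℂ → ℂ}
    (hv1 : ∀ γ : ℂ, inΛ γ → ∀ z : ℂ,
      v (z + γ) = exp (2 * I * (pairing γ Kpt : ℂ)) * v z)
    (hv2 : ∀ z : ℂ, v (ω * z) = v z) {z γ : ℂ} (hγ : inΛ γ) (hz : ω * z = z + γ)
    (hphase : exp (2 * I * (pairing γ Kpt : ℂ)) ≠ 1) : v z = 0 := by
  have hfix : exp (2 * I * (pairing γ Kpt : ℂ)) * v z = v z := by
    rw [← hv1 γ hγ z, ← hz, hv2]
  by_contra hvz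
  exact hphase ((mul_eq_right₀ hvz).1 hfix)

theorem stmt1 (v : ℂ → ℂ)
    (hv1 : ∀ γ : ℂ, inΛ γ → ∀ z : ℂ,
      v (z + γ) = Complex.exp (2 * Complex.I * (pairing γ Kpt : ℂ)) * v z)
    (hv2 : ∀ z : ℂ, v (ω * z) = v z) :
    v zS = 0 ∧ v (-zS) = 0 := by
  constructor
  · refine eq_zero_of_ω_mul_eq_add hv1 hv2 inΛ_neg_one_sub_ω ω_mul_zS ?_
    rw [pairing_neg_one_sub_ω_Kpt]
    simpa using exp_two_mul_I_mul_two_pi_div_three_ne_one (k := -1) (by decide)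
  · refine eq_zero_of_ω_mul_eq_add hv1 hv2 inΛ_one_add_ω ω_mul_neg_zS ?_
    rw [pairing_one_add_ω_Kpt]
    simpa using exp_two_mul_I_mul_two_pi_div_three_ne_one (k := 1) (by decide)

end
end

section
/- Let ω = e^{2πi/3}, Λ = ℤω ⊕ ℤ and ⟨z,w⟩ := Re(z·conj(w)). Suppose k ∈ ℂ and W : ℂ → ℂ is continuously differentiable, Λ-periodic (W(z+γ) = W(z) for all γ ∈ Λ), and satisfies 2D_{z̄}W + 2kW = 0 on ℂ. If W(z₁) = 0 for some z₁ ∈ ℂ, then W is identically zero. -/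
open Complex

noncomputable section

/-- `2 D_{z̄} u = -i (∂_x u + i ∂_y u)`. -/
def Dbar2 (u : ℂ → ℂ) : ℂ → ℂ := fun z =>
  -Complex.I * (fderiv ℝ u z 1 + Complex.I * fderiv ℝ u z Complex.I)

/-!
Multiplying by the unimodular plane wave `e^{i⟨2k, z⟩}` turns a solution of
`(2 D_{z̄} + 2k) W = 0` into a solution of `D_{z̄} g = 0`, i.e. an entire function `g`, with
`|g| = |W|`. A continuous `Λ`-periodic `W` is bounded (by its maximum on a compact fundamental
cell), so `g` is constant by Liouville's theorem, and the constant is `g(z₁) = 0`.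
-/

open ComplexConjugate

section Dbar2

variable {f g : ℂ → ℂ} {z : ℂ}

theorem differentiableAt_of_Dbar2_eq_zero (hf : DifferentiableAt ℝ f z) (h : Dbar2 f z = 0) :
    DifferentiableAt ℂ f z := by
  refine differentiableAt_complex_iff_differentiableAt_real.2 ⟨hf, ?_⟩
  simp only [Dbar2, smul_eq_mul] at h ⊢
  linear_combination h + fderiv ℝ f z I * I_mul_I

theorem Dbar2_mul (hf : DifferentiableAt ℝ f z) (hg : DifferentiableAt ℝ g z) :
    Dbar2 (fun w => f w * g w) z = f z * Dbar2 g z + g z * Dbar2 f z := by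
  simp only [Dbar2, fderiv_fun_mul hf hg, add_apply, smul_apply, smul_eq_mul]
  ring

theorem Dbar2_cexp (hf : DifferentiableAt ℝ f z) :
    Dbar2 (fun w => exp (f w)) z = exp (f z) * Dbar2 f z := by
  simp only [Dbar2, hf.hasFDerivAt.cexp.fderiv, smul_apply, smul_eq_mul]
  ring

theorem Dbar2_continuousLinearMap (L : ℂ →L[ℝ] ℂ) (z : ℂ) :
    Dbar2 L z = -I * (L 1 + I * L I) := by
  simp only [Dbar2, ContinuousLinearMap.fderiv]

end Dbar2

/-- The phase `z ↦ i⟨2k, z⟩ = i (k z̄ + k̄ z)` of the plane wave `e^{i⟨2k, z⟩}`. -/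
def planeWavePhase (k : ℂ) : ℂ →L[ℝ] ℂ :=
  (I * k) • conjCLE.toContinuousLinearMap + (I * conj k) • ContinuousLinearMap.id ℝ ℂ

theorem planeWavePhase_apply (k z : ℂ) :
    planeWavePhase k z = I * (k * conj z + conj (k * conj z)) := by
  simp only [planeWavePhase, add_apply, smul_apply, ContinuousLinearEquiv.coe_coe,
    ContinuousAlgEquiv.coeCLE_apply, conjCAE_apply, smul_eq_mul, ContinuousLinearMap.id_apply,
    map_mul, conj_conj]
  ring

theorem norm_exp_planeWavePhase (k z : ℂ) : ‖exp (planeWavePhase k z)‖ = 1 := by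
  rw [norm_exp, planeWavePhase_apply, ← re_add_im (k * conj z)]
  simp

theorem Dbar2_planeWavePhase (k z : ℂ) : Dbar2 (planeWavePhase k) z = 2 * k := by
  rw [Dbar2_continuousLinearMap]
  simp only [planeWavePhase_apply, map_one, mul_one, map_mul, conj_I, map_neg, neg_neg]
  linear_combination (-(k + conj k) + (I ^ 2 - 1) * (k - conj k)) * I_sq

theorem differentiable_exp_planeWavePhase_mul {k : ℂ} {W : ℂ → ℂ} (hW : Differentiable ℝ W)
    (heq : ∀ z, Dbar2 W z + 2 * k * W z = 0) :
    Differentiable ℂ fun z => exp (planeWavePhase k z) * W z := by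
  intro z
  have hφ : DifferentiableAt ℝ (fun w => exp (planeWavePhase k w)) z :=
    (planeWavePhase k).differentiableAt.cexp
  refine differentiableAt_of_Dbar2_eq_zero (hφ.mul (hW z)) ?_
  rw [Dbar2_mul hφ (hW z), Dbar2_cexp (planeWavePhase k).differentiableAt, Dbar2_planeWavePhase]
  linear_combination exp (planeWavePhase k z) * heq z

theorem exists_ofReal_mul_add_ofReal_eq {τ : ℂ} (hτ : τ.im ≠ 0) (z : ℂ) :
    ∃ a b : ℝ, (a : ℂ) * τ + b = z := by
  refine ⟨z.im / τ.im, z.re - z.im / τ.im * τ.re, Complex.ext ?_ ?_⟩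
  · simp
  · simp [div_mul_cancel₀ _ hτ]

theorem isBounded_range_of_periodic {E : Type*} [PseudoMetricSpace E] {τ : ℂ} (hτ : τ.im ≠ 0)
    {f : ℂ → E} (hf : Continuous f) (hper : ∀ (m n : ℤ) (z : ℂ), f (z + (m * τ + n)) = f z) :
    Bornology.IsBounded (Set.range f) := by
  let cell : ℝ × ℝ → ℂ := fun p => p.1 * τ + p.2
  have hcell : IsCompact (cell '' Set.Icc 0 1 ×ˢ Set.Icc 0 1) :=
    (isCompact_Icc.prod isCompact_Icc).image (by fun_prop)
  refine (hcell.image hf).isBounded.subset ?_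
  rintro _ ⟨z, rfl⟩
  obtain ⟨a, b, rfl⟩ := exists_ofReal_mul_add_ofReal_eq hτ z
  refine ⟨cell (Int.fract a, Int.fract b), ⟨_, ⟨⟨Int.fract_nonneg a, (Int.fract_lt_one a).le⟩,
    Int.fract_nonneg b, (Int.fract_lt_one b).le⟩, rfl⟩, ?_⟩
  rw [← hper ⌊a⌋ ⌊b⌋]
  simp only [cell, Int.fract]
  push_cast
  ring_nf

theorem ω_im_pos : 0 < ω.im := by
  have hω : ω = exp (((2 * Real.pi / 3 : ℝ) : ℂ) * I) := by
    unfold ω; push_cast; ring_nf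
  rw [hω, exp_ofReal_mul_I_im]
  exact Real.sin_pos_of_pos_of_lt_pi (by positivity) (by linarith [Real.pi_pos])

theorem stmt9 (k : ℂ) (W : ℂ → ℂ) (hW : ContDiff ℝ 1 W)
    (hper : ∀ γ : ℂ, inΛ γ → ∀ z : ℂ, W (z + γ) = W z)
    (heq : ∀ z : ℂ, Dbar2 W z + 2 * k * W z = 0)
    (z₁ : ℂ) (hz₁ : W z₁ = 0) :
    ∀ z : ℂ, W z = 0 := by
  set g : ℂ → ℂ := fun z => exp (planeWavePhase k z) * W z
  have hg : Differentiable ℂ g :=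
    differentiable_exp_planeWavePhase_mul (hW.differentiable one_ne_zero) heq
  have hg_bdd : Bornology.IsBounded (Set.range g) := by
    have hW_bdd := isBounded_range_of_periodic ω_im_pos.ne' hW.continuous
      fun m n z => hper _ ⟨m, n, rfl⟩ z
    obtain ⟨C, hC⟩ := isBounded_iff_forall_norm_le.1 hW_bdd
    refine isBounded_iff_forall_norm_le.2 ⟨C, ?_⟩
    rintro _ ⟨z, rfl⟩
    simpa [g, norm_exp_planeWavePhase] using hC _ ⟨z, rfl⟩
  intro z
  simpa [g, hz₁, exp_ne_zero] using hg.apply_eq_apply_of_bounded hg_bdd z z₁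

end
end
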